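/- arXiv:1809.07072 — 8 statements merged into one kernel-verified Lean document; each statement's English description precedes it below -/
import Mathlib

section
/- Let A > β_2 > 0 and P > 0 be real numbers. Then the function f(p) = log₂(1 + A p) + log₂(1 + β_2 (P - p)/(1 + β_2 p)) is strictly increasing on [0, P]; consequently f attains its maximum over [0, P] at the unique point p = P, with maximum value log₂(1 + A P). -/
private lemma noma_rewrite (A β₂ P p : ℝ) (hA : 0 < A) (hβ₂ : 0 < β₂)
    (hp0 : 0 ≤ p) (hpP : p ≤ P) :
    Real.logb 2 (1 + A * p) + Real.logb 2 (1 + β₂ * (P - p) / (1 + β₂ * p)) =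
      Real.logb 2 ((1 + A * p) * (1 + β₂ * P) / (1 + β₂ * p)) := by
  have hP0 : (0:ℝ) ≤ P := hp0.trans hpP
  have hd : (0:ℝ) < 1 + β₂ * p := by positivity
  have h1 : (0:ℝ) < 1 + A * p := by positivity
  have h2 : 1 + β₂ * (P - p) / (1 + β₂ * p) = (1 + β₂ * P) / (1 + β₂ * p) := by
    field_simp; ring
  rw [h2, ← Real.logb_mul (by positivity) (by positivity)]
  rw [mul_div_assoc]

/-- If `A > β₂ > 0` and `P > 0`, the NOMA group sum rate
`f(p) = log₂(1+Ap) + log₂(1+β₂(P-p)/(1+β₂p))` is strictly increasing on `[0,P]`,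
its maximum over `[0,P]` is attained exactly at `p = P`, with value `log₂(1+AP)`. -/
theorem noma_group_rate_strictMonoOn_max (A β₂ P : ℝ) (hA : β₂ < A) (hβ₂ : 0 < β₂)
    (hP : 0 < P) :
    StrictMonoOn
        (fun p : ℝ =>
          Real.logb 2 (1 + A * p) + Real.logb 2 (1 + β₂ * (P - p) / (1 + β₂ * p)))
        (Set.Icc 0 P) ∧
      (∀ p ∈ Set.Icc (0 : ℝ) P,
        Real.logb 2 (1 + A * p) + Real.logb 2 (1 + β₂ * (P - p) / (1 + β₂ * p)) ≤
          Real.logb 2 (1 + A * P)) ∧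
      (∀ p ∈ Set.Icc (0 : ℝ) P,
        Real.logb 2 (1 + A * p) + Real.logb 2 (1 + β₂ * (P - p) / (1 + β₂ * p)) =
            Real.logb 2 (1 + A * P) → p = P) := by
  have hA0 : (0:ℝ) < A := lt_trans hβ₂ hA
  have hmono : StrictMonoOn
      (fun p : ℝ =>
        Real.logb 2 (1 + A * p) + Real.logb 2 (1 + β₂ * (P - p) / (1 + β₂ * p)))
      (Set.Icc 0 P) := by
    intro x hx y hy hxy
    simp only
    rw [noma_rewrite A β₂ P x hA0 hβ₂ hx.1 hx.2,
        noma_rewrite A β₂ P y hA0 hβ₂ hy.1 hy.2]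
    have hdx : (0:ℝ) < 1 + β₂ * x := by have := hx.1; positivity
    have hdy : (0:ℝ) < 1 + β₂ * y := by have := hy.1; positivity
    have hnx : (0:ℝ) < 1 + A * x := by have := hx.1; positivity
    have hP1 : (0:ℝ) < 1 + β₂ * P := by positivity
    apply Real.logb_lt_logb one_lt_two (by positivity)
    rw [div_lt_div_iff₀ hdx hdy]
    have key : (1 + A * x) * (1 + β₂ * y) < (1 + A * y) * (1 + β₂ * x) := by
      nlinarith [mul_pos (sub_pos.mpr hA) (sub_pos.mpr hxy)]
    nlinarith [key, hP1]
  refine ⟨hmono, ?_, ?_⟩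
  · intro p hp
    have hfP : Real.logb 2 (1 + A * P) + Real.logb 2 (1 + β₂ * (P - P) / (1 + β₂ * P)) =
        Real.logb 2 (1 + A * P) := by simp
    rcases eq_or_lt_of_le hp.2 with h | h
    · subst h; simp
    · have := hmono hp (Set.mem_Icc.mpr ⟨le_of_lt hP, le_refl P⟩) h
      simp only at this
      linarith [this, hfP.ge, hfP.le]
  · intro p hp heq
    by_contra hne
    have h : p < P := lt_of_le_of_ne hp.2 hne
    have := hmono hp (Set.mem_Icc.mpr ⟨le_of_lt hP, le_refl P⟩) h
    simp only at this
    have hfP : Real.logb 2 (1 + A * P) + Real.logb 2 (1 + β₂ * (P - P) / (1 + β₂ * P)) =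
        Real.logb 2 (1 + A * P) := by simp
    linarith
end

section
/- Let K be an even positive integer, M̄ = M + 1 - K/2 ≥ 1, p_max > 0, and β_1,...,β_K > 0 with β_j > β_i for all center indices j ≤ K/2 and edge indices i > K/2. Then the maximum over p ⪰ 0, Σ_{k=1}^K p_k ≤ p_max of the NOMA sum rate Σ_{k=1}^{K/2} log₂(1 + p_k β_k M̄) + Σ_{k=K/2+1}^{K} log₂(1 + p_k β_k/(p_{k-K/2} β_k + 1)) equals the maximum over q_1,...,q_{K/2} ≥ 0 with Σ_{k=1}^{K/2} q_k ≤ p_max of Σ_{k=1}^{K/2} log₂(1 + M̄ β_k q_k). -/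
lemma noma_group_step (a b p e : ℝ) (ha : 0 < a) (hb : 0 < b) (hba : b ≤ a)
    (hp : 0 ≤ p) (he : 0 ≤ e) :
    0 ≤ ((1 + p * a) * (1 + e * b / (p * b + 1)) - 1) / a ∧
    ((1 + p * a) * (1 + e * b / (p * b + 1)) - 1) / a ≤ p + e ∧
    Real.logb 2 (1 + p * a) + Real.logb 2 (1 + e * b / (p * b + 1)) =
      Real.logb 2 (1 + (((1 + p * a) * (1 + e * b / (p * b + 1)) - 1) / a) * a) := by
  have hpb : (0:ℝ) < p * b + 1 := by positivity
  have hfrac : 0 ≤ e * b / (p * b + 1) := by positivity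
  have hE1 : (1:ℝ) ≤ 1 + e * b / (p * b + 1) := by linarith
  have hpa : (1:ℝ) ≤ 1 + p * a := by nlinarith
  have hP1 : (1:ℝ) ≤ (1 + p * a) * (1 + e * b / (p * b + 1)) := by nlinarith
  have hEeq : (1 + e * b / (p * b + 1)) * (p * b + 1) = p * b + 1 + e * b := by
    field_simp
  refine ⟨div_nonneg (by linarith) ha.le, ?_, ?_⟩
  · rw [div_le_iff₀ ha]
    nlinarith [mul_nonneg he (sub_nonneg.2 hba), mul_nonneg (mul_nonneg he (sub_nonneg.2 hba)) hp]
  · have h1 : (1 + (((1 + p * a) * (1 + e * b / (p * b + 1)) - 1) / a) * a) =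
        (1 + p * a) * (1 + e * b / (p * b + 1)) := by
      rw [div_mul_cancel₀ _ ha.ne']; ring
    rw [h1, Real.logb_mul (by linarith) (by linarith)]

/-- The NOMA sum-rate maximization over all `K` users reduces to a water-filling
problem over the `K/2` cell-center users only: the two problems have the same
maximum value. -/
theorem noma_sum_rate_max_eq_center_waterfilling
    (K M : ℕ) (hK : Even K) (hKpos : 0 < K)
    (Mbar : ℝ) (hMbar : Mbar = (M : ℝ) + 1 - (K / 2 : ℕ)) (hMbar1 : 1 ≤ Mbar)
    (pmax : ℝ) (hpmax : 0 < pmax)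
    (β : ℕ → ℝ) (hβpos : ∀ k ∈ Finset.Icc 1 K, 0 < β k)
    (hβ : ∀ j ∈ Finset.Icc 1 (K / 2), ∀ i ∈ Finset.Icc (K / 2 + 1) K, β i < β j) :
    ∃ v : ℝ,
      IsGreatest
        {r : ℝ | ∃ p : ℕ → ℝ, (∀ k ∈ Finset.Icc 1 K, 0 ≤ p k) ∧
          (∑ k ∈ Finset.Icc 1 K, p k ≤ pmax) ∧
          r = ∑ k ∈ Finset.Icc 1 (K / 2), Real.logb 2 (1 + p k * β k * Mbar) +
                ∑ k ∈ Finset.Icc (K / 2 + 1) K,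
                  Real.logb 2 (1 + p k * β k / (p (k - K / 2) * β k + 1))} v ∧
      IsGreatest
        {r : ℝ | ∃ q : ℕ → ℝ, (∀ k ∈ Finset.Icc 1 (K / 2), 0 ≤ q k) ∧
          (∑ k ∈ Finset.Icc 1 (K / 2), q k ≤ pmax) ∧
          r = ∑ k ∈ Finset.Icc 1 (K / 2), Real.logb 2 (1 + Mbar * β k * q k)} v := by
  obtain ⟨n, hn2⟩ := hK
  have hKn : K / 2 = n := by omega
  have hn1 : 1 ≤ n := by omega
  have hnK : n ≤ K := by omega
  rw [hKn] at hβ ⊢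
  have hMbar0 : (0:ℝ) < Mbar := lt_of_lt_of_le one_pos hMbar1
  -- positivity facts
  have hcpos : ∀ k ∈ Finset.Icc 1 n, 0 < β k := fun k hk => by
    refine hβpos k ?_
    simp only [Finset.mem_Icc] at hk ⊢; omega
  -- general splitting lemma for sums over Icc 1 K
  have hsplit : ∀ f : ℕ → ℝ, ∑ k ∈ Finset.Icc 1 K, f k =
      ∑ k ∈ Finset.Icc 1 n, f k + ∑ k ∈ Finset.Icc (n + 1) K, f k := by
    intro f
    rw [← Finset.sum_union]
    · congr 1
      ext k
      simp only [Finset.mem_union, Finset.mem_Icc]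
      omega
    · rw [Finset.disjoint_left]
      intro k hk1 hk2
      simp only [Finset.mem_Icc] at hk1 hk2
      omega
  have hmap : Finset.Icc (n + 1) K = (Finset.Icc 1 n).map (addRightEmbedding n) := by
    rw [Finset.map_add_right_Icc]
    congr 1 <;> omega
  have hreindex : ∀ f : ℕ → ℝ, ∑ k ∈ Finset.Icc (n + 1) K, f k =
      ∑ k ∈ Finset.Icc 1 n, f (k + n) := by
    intro f
    rw [hmap, Finset.sum_map]
    rfl
  -- the compact feasible set and objective for the center-only problem
  set S : Set (ℕ → ℝ) :=
    {q | (∀ k, q k ∈ Set.Icc (0:ℝ) pmax) ∧ ∑ k ∈ Finset.Icc 1 n, q k ≤ pmax} with hS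
  set F : (ℕ → ℝ) → ℝ :=
    fun q => ∑ k ∈ Finset.Icc 1 n, Real.logb 2 (1 + Mbar * β k * q k) with hF
  have hSc : IsCompact S := by
    have h1 : IsCompact (Set.univ.pi fun _ : ℕ => Set.Icc (0:ℝ) pmax) :=
      isCompact_univ_pi fun _ => isCompact_Icc
    have h2 : IsClosed {q : ℕ → ℝ | ∑ k ∈ Finset.Icc 1 n, q k ≤ pmax} :=
      isClosed_le (continuous_finset_sum _ fun k _ => continuous_apply k) continuous_const
    have hSeq : S = (Set.univ.pi fun _ : ℕ => Set.Icc (0:ℝ) pmax) ∩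
        {q : ℕ → ℝ | ∑ k ∈ Finset.Icc 1 n, q k ≤ pmax} := by
      ext q
      simp only [hS, Set.mem_setOf_eq, Set.mem_inter_iff, Set.mem_univ_pi, Set.mem_Icc]
    rw [hSeq]
    exact h1.inter_right h2
  have hFc : ContinuousOn F S := by
    apply continuousOn_finset_sum
    intro k hk
    have hck : 0 < Mbar * β k := mul_pos hMbar0 (hcpos k hk)
    refine Real.continuousOn_logb.comp
      (Continuous.continuousOn (continuous_const.add (continuous_const.mul (continuous_apply k)))) ?_
    intro q hq
    have h0 : 0 ≤ q k := (hq.1 k).1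
    have : (0:ℝ) < 1 + Mbar * β k * q k := by nlinarith
    simp only [Set.mem_compl_iff, Set.mem_singleton_iff]
    exact this.ne'
  have hSne : S.Nonempty := by
    refine ⟨fun _ => 0, fun k => ⟨le_rfl, hpmax.le⟩, ?_⟩
    simp [hpmax.le]
  obtain ⟨v, hvmem, hvub⟩ := (hSc.image_of_continuousOn hFc).exists_isGreatest (hSne.image F)
  -- the center-only feasible-value set equals F '' S
  have hBsub : {r : ℝ | ∃ q : ℕ → ℝ, (∀ k ∈ Finset.Icc 1 n, 0 ≤ q k) ∧
      (∑ k ∈ Finset.Icc 1 n, q k ≤ pmax) ∧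
      r = ∑ k ∈ Finset.Icc 1 n, Real.logb 2 (1 + Mbar * β k * q k)} ⊆ F '' S := by
    rintro r ⟨q, hq0, hqs, rfl⟩
    refine ⟨fun k => if k ∈ Finset.Icc 1 n then q k else 0, ⟨?_, ?_⟩, ?_⟩
    · intro k
      by_cases hk : k ∈ Finset.Icc 1 n
      · simp only [hk, if_true, Set.mem_Icc]
        exact ⟨hq0 k hk,
          le_trans (Finset.single_le_sum (fun j hj => hq0 j hj) hk) hqs⟩
      · simp [hk, hpmax.le]
    · calc ∑ k ∈ Finset.Icc 1 n, (if k ∈ Finset.Icc 1 n then q k else 0)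
          = ∑ k ∈ Finset.Icc 1 n, q k := Finset.sum_congr rfl fun k hk => by simp [hk]
        _ ≤ pmax := hqs
    · simp only [hF]
      exact Finset.sum_congr rfl fun k hk => by simp [hk]
  have hBsup : F '' S ⊆ {r : ℝ | ∃ q : ℕ → ℝ, (∀ k ∈ Finset.Icc 1 n, 0 ≤ q k) ∧
      (∑ k ∈ Finset.Icc 1 n, q k ≤ pmax) ∧
      r = ∑ k ∈ Finset.Icc 1 n, Real.logb 2 (1 + Mbar * β k * q k)} := by
    rintro r ⟨q, hqS, rfl⟩
    exact ⟨q, fun k _ => (hqS.1 k).1, hqS.2, rfl⟩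
  refine ⟨v, ⟨?_, ?_⟩, ?_, ?_⟩
  · -- v is attained in the full NOMA problem
    obtain ⟨q, hqS, hFq⟩ := hvmem
    refine ⟨fun k => if k ∈ Finset.Icc 1 n then q k else 0, ?_, ?_, ?_⟩
    · intro k _
      by_cases hk : k ∈ Finset.Icc 1 n
      · simp only [hk, if_true]; exact (hqS.1 k).1
      · simp [hk]
    · rw [hsplit]
      have h2 : ∑ k ∈ Finset.Icc (n + 1) K,
          (if k ∈ Finset.Icc 1 n then q k else 0) = 0 := by
        refine Finset.sum_eq_zero fun k hk => ?_
        simp only [Finset.mem_Icc] at hk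
        rw [if_neg (by simp only [Finset.mem_Icc]; omega)]
      have h1 : ∑ k ∈ Finset.Icc 1 n,
          (if k ∈ Finset.Icc 1 n then q k else 0) = ∑ k ∈ Finset.Icc 1 n, q k :=
        Finset.sum_congr rfl fun k hk => by simp [hk]
      rw [h1, h2, add_zero]
      exact hqS.2
    · have hcenter : ∑ k ∈ Finset.Icc 1 n,
          Real.logb 2 (1 + (if k ∈ Finset.Icc 1 n then q k else 0) * β k * Mbar) =
          ∑ k ∈ Finset.Icc 1 n, Real.logb 2 (1 + Mbar * β k * q k) := by
        refine Finset.sum_congr rfl fun k hk => ?_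
        rw [if_pos hk]
        congr 1
        ring
      have hedge : ∑ k ∈ Finset.Icc (n + 1) K,
          Real.logb 2 (1 + (if k ∈ Finset.Icc 1 n then q k else 0) * β k /
            ((if k - n ∈ Finset.Icc 1 n then q (k - n) else 0) * β k + 1)) = 0 := by
        refine Finset.sum_eq_zero fun k hk => ?_
        simp only [Finset.mem_Icc] at hk
        rw [if_neg (by simp only [Finset.mem_Icc]; omega)]
        simp
      rw [hcenter, hedge, add_zero, ← hFq]
  · -- v is an upper bound for the full NOMA problem
    rintro r ⟨p, hp0, hps, rfl⟩
    set q' : ℕ → ℝ := fun k =>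
      ((1 + p k * (β k * Mbar)) *
        (1 + p (k + n) * β (k + n) / (p k * β (k + n) + 1)) - 1) / (β k * Mbar)
      with hq'def
    have key : ∀ k ∈ Finset.Icc 1 n, 0 ≤ q' k ∧ q' k ≤ p k + p (k + n) ∧
        Real.logb 2 (1 + p k * (β k * Mbar)) +
          Real.logb 2 (1 + p (k + n) * β (k + n) / (p k * β (k + n) + 1)) =
          Real.logb 2 (1 + q' k * (β k * Mbar)) := by
      intro k hk
      simp only [Finset.mem_Icc] at hk
      have hkK : k ∈ Finset.Icc 1 K := by simp only [Finset.mem_Icc]; omega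
      have hknK : k + n ∈ Finset.Icc 1 K := by simp only [Finset.mem_Icc]; omega
      have ha : 0 < β k * Mbar :=
        mul_pos (hcpos k (by simp only [Finset.mem_Icc]; omega)) hMbar0
      have hb : 0 < β (k + n) := hβpos (k + n) hknK
      have hba : β (k + n) ≤ β k * Mbar := by
        have h1 : β (k + n) < β k :=
          hβ k (by simp only [Finset.mem_Icc]; omega) (k + n)
            (by simp only [Finset.mem_Icc]; omega)
        have h2 : β k ≤ β k * Mbar :=
          le_mul_of_one_le_right (hβpos k hkK).le hMbar1
        linarith
      exact noma_group_step (β k * Mbar) (β (k + n)) (p k) (p (k + n)) ha hb hba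
        (hp0 k hkK) (hp0 (k + n) hknK)
    refine hvub (hBsub ⟨q', fun k hk => (key k hk).1, ?_, ?_⟩)
    · calc ∑ k ∈ Finset.Icc 1 n, q' k
          ≤ ∑ k ∈ Finset.Icc 1 n, (p k + p (k + n)) :=
            Finset.sum_le_sum fun k hk => (key k hk).2.1
        _ = ∑ k ∈ Finset.Icc 1 n, p k + ∑ k ∈ Finset.Icc 1 n, p (k + n) :=
            Finset.sum_add_distrib
        _ = ∑ k ∈ Finset.Icc 1 K, p k := by rw [hsplit p, hreindex p]
        _ ≤ pmax := hps
    · rw [hreindex]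
      simp only [Nat.add_sub_cancel]
      rw [← Finset.sum_add_distrib]
      refine Finset.sum_congr rfl fun k hk => ?_
      have h := (key k hk).2.2
      have e1 : p k * β k * Mbar = p k * (β k * Mbar) := by ring
      rw [e1, h]
      congr 1
      ring
  · exact hBsup hvmem
  · exact fun r hr => hvub (hBsub hr)
end

section
/- Let β_1 > β_2 > 0, P > 0, and let M̄ = M (the two-user NOMA array gain with K = 2). Then the maximum over p_1, p_2 ≥ 0 with p_1 + p_2 ≤ P of log₂(1 + p_1 β_1 M) + log₂(1 + p_2 β_2 / (1 + p_1 β_2)) equals log₂(1 + P β_1 M), attained at p_1 = P, p_2 = 0, provided M β_1 > β_2 (which holds since M ≥ 1 and β_1 > β_2). -/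
/-- Two-user NOMA with array gain `M̄ = M` (since `K = 2`): the maximum of
`log₂(1+p₁β₁M) + log₂(1+p₂β₂/(1+p₁β₂))` over `p₁,p₂ ≥ 0`, `p₁+p₂ ≤ P` equals
`log₂(1+Pβ₁M)`, attained at `p₁ = P`, `p₂ = 0`. -/
theorem noma_two_user_max_rate (M : ℕ) (hM : 1 ≤ M)
    (β₁ β₂ P : ℝ) (hβ : β₂ < β₁) (hβ₂ : 0 < β₂) (hP : 0 < P) :
    (∀ p₁ p₂ : ℝ, 0 ≤ p₁ → 0 ≤ p₂ → p₁ + p₂ ≤ P →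
      Real.logb 2 (1 + p₁ * β₁ * (M : ℝ)) +
          Real.logb 2 (1 + p₂ * β₂ / (1 + p₁ * β₂)) ≤
        Real.logb 2 (1 + P * β₁ * (M : ℝ))) ∧
      Real.logb 2 (1 + P * β₁ * (M : ℝ)) +
          Real.logb 2 (1 + 0 * β₂ / (1 + P * β₂)) =
        Real.logb 2 (1 + P * β₁ * (M : ℝ)) := by
  have hM1 : (1 : ℝ) ≤ (M : ℝ) := by exact_mod_cast hM
  have hβ₁ : 0 < β₁ := lt_trans hβ₂ hβ
  constructor
  · intro p₁ p₂ hp₁ hp₂ hsum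
    have hD : 0 < 1 + p₁ * β₂ := by positivity
    have hA : 0 < 1 + p₁ * β₁ * (M : ℝ) := by positivity
    have hB : 0 < 1 + p₂ * β₂ / (1 + p₁ * β₂) := by positivity
    rw [← Real.logb_mul (ne_of_gt hA) (ne_of_gt hB)]
    apply (Real.logb_le_logb one_lt_two (by positivity) (by positivity)).mpr
    have hrw : 1 + p₂ * β₂ / (1 + p₁ * β₂) = (1 + p₁ * β₂ + p₂ * β₂) / (1 + p₁ * β₂) := by
      field_simp
    rw [hrw, ← mul_div_assoc, div_le_iff₀ hD]
    have h1 : p₂ * β₂ ≤ p₂ * β₁ := mul_le_mul_of_nonneg_left hβ.le hp₂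
    have h2 : p₂ * β₁ ≤ p₂ * β₁ * (M : ℝ) := le_mul_of_one_le_right (mul_nonneg hp₂ hβ₁.le) hM1
    have h3 : p₂ * (β₁ * (M : ℝ)) ≤ (P - p₁) * (β₁ * (M : ℝ)) :=
      mul_le_mul_of_nonneg_right (by linarith) (by positivity)
    have h4 : 0 ≤ p₁ * β₁ * (M : ℝ) * β₂ * (P - p₁ - p₂) := by
      have : 0 ≤ P - p₁ - p₂ := by linarith
      positivity
    nlinarith [h1, h2, h3, h4]
  · norm_num
end

section
/- Let β_1 > β_2 > 0 and P > 0 be real numbers, and let M > 2 be real. Then (β_1 + β_2 + P β_1 β_2 (M - 2))² / (4 β_1 β_2) ≥ 1 + P β_1 M if and only if ( M - 2 - (β_1 - β_2)/(P β_1 β_2) )² ≥ 8 / (P β_2). -/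
/-- Key algebraic step comparing two-user mMIMO and NOMA maximum sum rates:
`(β₁+β₂+Pβ₁β₂(M-2))²/(4β₁β₂) ≥ 1+Pβ₁M` iff
`(M-2-(β₁-β₂)/(Pβ₁β₂))² ≥ 8/(Pβ₂)`. -/
theorem mmimo_vs_noma_algebraic_iff (β₁ β₂ P M : ℝ)
    (hβ : β₂ < β₁) (hβ₂ : 0 < β₂) (hP : 0 < P) (hM : 2 < M) :
    1 + P * β₁ * M ≤ (β₁ + β₂ + P * β₁ * β₂ * (M - 2)) ^ 2 / (4 * β₁ * β₂) ↔
      8 / (P * β₂) ≤ (M - 2 - (β₁ - β₂) / (P * β₁ * β₂)) ^ 2 := by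
  have hβ₁ : 0 < β₁ := hβ₂.trans hβ
  have h4 : (0:ℝ) < 4 * β₁ * β₂ := by positivity
  have hp2 : (0:ℝ) < P * β₂ := by positivity
  have hpb : (0:ℝ) < P * β₁ * β₂ := by positivity
  rw [le_div_iff₀ h4, div_le_iff₀ hp2]
  set e := (β₁ - β₂) / (P * β₁ * β₂) with he_def
  have he : e * (P * β₁ * β₂) = β₁ - β₂ := div_mul_cancel₀ _ (ne_of_gt hpb)
  have hmul : (M - 2 - e) * (P * β₁ * β₂) = P * β₁ * β₂ * (M - 2) - (β₁ - β₂) := by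
    rw [sub_mul, he]; ring
  have key : (M - 2 - e) ^ 2 * (P * β₂) * (P * β₁ ^ 2 * β₂) =
      (P * β₁ * β₂ * (M - 2) - (β₁ - β₂)) ^ 2 := by
    rw [← hmul]; ring
  have hpos : (0:ℝ) < P * β₁ ^ 2 * β₂ := by positivity
  constructor <;> intro h <;> nlinarith [key, hpos, mul_pos hpos hpos]
end

section
/- Let β_1 > β_2 > 0, P > 0, and define a_1 = 2 + (β_1 - β_2)/(P β_1 β_2) - 2√2/√(P β_2) and a_2 = 2 + (β_1 - β_2)/(P β_1 β_2) + 2√2/√(P β_2). Then for all real M, ( M - 2 - (β_1 - β_2)/(P β_1 β_2) )² - 8/(P β_2) = (M - a_1)(M - a_2); in particular a_1 < a_2, and for every M ≥ a_2 one has (β_1 + β_2 + P β_1 β_2 (M - 2))²/(4 β_1 β_2) ≥ 1 + P β_1 M. -/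
/-- Factorization of the mMIMO-vs-NOMA comparison polynomial: with
`a₁ = 2 + (β₁-β₂)/(Pβ₁β₂) - 2√2/√(Pβ₂)` and `a₂ = 2 + (β₁-β₂)/(Pβ₁β₂) + 2√2/√(Pβ₂)`,
one has `(M-2-(β₁-β₂)/(Pβ₁β₂))² - 8/(Pβ₂) = (M-a₁)(M-a₂)` for all real `M`; in
particular `a₁ < a₂`, and for every `M ≥ a₂`,
`(β₁+β₂+Pβ₁β₂(M-2))²/(4β₁β₂) ≥ 1+Pβ₁M`. -/
theorem mmimo_vs_noma_factorization (β₁ β₂ P : ℝ)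
    (hβ : β₂ < β₁) (hβ₂ : 0 < β₂) (hP : 0 < P) :
    (∀ M : ℝ,
      (M - 2 - (β₁ - β₂) / (P * β₁ * β₂)) ^ 2 - 8 / (P * β₂) =
        (M - (2 + (β₁ - β₂) / (P * β₁ * β₂) - 2 * Real.sqrt 2 / Real.sqrt (P * β₂))) *
          (M - (2 + (β₁ - β₂) / (P * β₁ * β₂) + 2 * Real.sqrt 2 / Real.sqrt (P * β₂)))) ∧
      (2 + (β₁ - β₂) / (P * β₁ * β₂) - 2 * Real.sqrt 2 / Real.sqrt (P * β₂) <
        2 + (β₁ - β₂) / (P * β₁ * β₂) + 2 * Real.sqrt 2 / Real.sqrt (P * β₂)) ∧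
      (∀ M : ℝ,
        2 + (β₁ - β₂) / (P * β₁ * β₂) + 2 * Real.sqrt 2 / Real.sqrt (P * β₂) ≤ M →
        1 + P * β₁ * M ≤ (β₁ + β₂ + P * β₁ * β₂ * (M - 2)) ^ 2 / (4 * β₁ * β₂)) := by
  have hβ₁ : 0 < β₁ := hβ₂.trans hβ
  have hPb2 : 0 < P * β₂ := mul_pos hP hβ₂
  have hs : 0 < Real.sqrt (P * β₂) := Real.sqrt_pos.mpr hPb2
  have ht : (2 * Real.sqrt 2 / Real.sqrt (P * β₂)) ^ 2 = 8 / (P * β₂) := by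
    rw [div_pow, mul_pow, Real.sq_sqrt (by norm_num : (2:ℝ) ≥ 0),
      Real.sq_sqrt hPb2.le]
    norm_num
  have htpos : 0 < 2 * Real.sqrt 2 / Real.sqrt (P * β₂) := by positivity
  have hfact : ∀ M : ℝ,
      (M - 2 - (β₁ - β₂) / (P * β₁ * β₂)) ^ 2 - 8 / (P * β₂) =
        (M - (2 + (β₁ - β₂) / (P * β₁ * β₂) - 2 * Real.sqrt 2 / Real.sqrt (P * β₂))) *
          (M - (2 + (β₁ - β₂) / (P * β₁ * β₂) + 2 * Real.sqrt 2 / Real.sqrt (P * β₂))) := by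
    intro M
    linear_combination ht
  refine ⟨hfact, by linarith, ?_⟩
  intro M hM
  have h2 : 0 ≤ M - (2 + (β₁ - β₂) / (P * β₁ * β₂) + 2 * Real.sqrt 2 / Real.sqrt (P * β₂)) :=
    by linarith
  have h1 : 0 ≤ M - (2 + (β₁ - β₂) / (P * β₁ * β₂) - 2 * Real.sqrt 2 / Real.sqrt (P * β₂)) :=
    by linarith
  have hq : 0 ≤ (M - 2 - (β₁ - β₂) / (P * β₁ * β₂)) ^ 2 - 8 / (P * β₂) := by
    rw [hfact M]; exact mul_nonneg h1 h2
  have key : (β₁ + β₂ + P * β₁ * β₂ * (M - 2)) ^ 2 - 4 * β₁ * β₂ * (1 + P * β₁ * M) =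
      (P * β₁ * β₂) ^ 2 * ((M - 2 - (β₁ - β₂) / (P * β₁ * β₂)) ^ 2 - 8 / (P * β₂)) := by
    field_simp
    ring
  rw [le_div_iff₀ (by positivity)]
  nlinarith [sq_nonneg (P * β₁ * β₂), mul_nonneg (sq_nonneg (P * β₁ * β₂)) hq]
end

section
/- Let β_1 > β_2 > 0 and p_max > 0, and set M̃ = 2 + (β_1 - β_2)/(p_max β_1 β_2) + 2√2/√(p_max β_2) and M* = ⌈M̃⌉. Then for every integer M ≥ M* satisfying p_max ≥ (β_1 - β_2)/(β_1 β_2 (M - 2)), the two-user maximum mMIMO sum rate is at least the two-user maximum NOMA sum rate: log₂( (β_1 + β_2 + p_max β_1 β_2 (M - 2))² / (4 β_1 β_2) ) ≥ log₂( 1 + p_max β_1 M ). -/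
/-- With `M̃ = 2 + (β₁-β₂)/(p_maxβ₁β₂) + 2√2/√(p_maxβ₂)` and `M* = ⌈M̃⌉`, for every
integer number of antennas `M ≥ M*` satisfying `p_max ≥ (β₁-β₂)/(β₁β₂(M-2))`, the
two-user maximum mMIMO sum rate is at least the two-user maximum NOMA sum rate. -/
theorem mmimo_beats_noma_above_Mstar (β₁ β₂ pmax : ℝ)
    (hβ : β₂ < β₁) (hβ₂ : 0 < β₂) (hpmax : 0 < pmax) :
    ∀ M : ℤ,
      ⌈2 + (β₁ - β₂) / (pmax * β₁ * β₂) + 2 * Real.sqrt 2 / Real.sqrt (pmax * β₂)⌉ ≤ M →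
      (β₁ - β₂) / (β₁ * β₂ * ((M : ℝ) - 2)) ≤ pmax →
      Real.logb 2 (1 + pmax * β₁ * (M : ℝ)) ≤
        Real.logb 2
          ((β₁ + β₂ + pmax * β₁ * β₂ * ((M : ℝ) - 2)) ^ 2 / (4 * β₁ * β₂)) := by
  intro M hM _
  have hβ₁ : 0 < β₁ := hβ₂.trans hβ
  have hMreal : 2 + (β₁ - β₂) / (pmax * β₁ * β₂) + 2 * Real.sqrt 2 / Real.sqrt (pmax * β₂)
      ≤ (M : ℝ) := le_trans (Int.le_ceil _) (by exact_mod_cast hM)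
  set s := Real.sqrt (pmax * β₂) with hsdef
  set t := Real.sqrt 2 with htdef
  have hs : 0 < s := Real.sqrt_pos.2 (by positivity)
  have hs2 : s ^ 2 = pmax * β₂ := Real.sq_sqrt (by positivity)
  have ht : 0 < t := Real.sqrt_pos.2 (by norm_num)
  have ht2 : t ^ 2 = 2 := Real.sq_sqrt (by norm_num)
  -- key quantity
  have hpβ : 0 < pmax * β₁ * β₂ := by positivity
  have hkey : 2 * t * β₁ * s ≤ pmax * β₁ * β₂ * ((M : ℝ) - 2) - (β₁ - β₂) := by
    have h1 : (β₁ - β₂) / (pmax * β₁ * β₂) + 2 * t / s ≤ (M : ℝ) - 2 := by linarith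
    have h2 : pmax * β₁ * β₂ * ((β₁ - β₂) / (pmax * β₁ * β₂) + 2 * t / s)
        ≤ pmax * β₁ * β₂ * ((M : ℝ) - 2) := by
      exact mul_le_mul_of_nonneg_left h1 hpβ.le
    have e1 : pmax * β₁ * β₂ * ((β₁ - β₂) / (pmax * β₁ * β₂)) = β₁ - β₂ := by
      field_simp
    have e2 : pmax * β₁ * β₂ * (2 * t / s) = 2 * t * β₁ * s := by
      field_simp
      linear_combination (-1) * hs2
    nlinarith [h2, e1, e2]
  have hDpos : 0 < pmax * β₁ * β₂ * ((M : ℝ) - 2) - (β₁ - β₂) :=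
    lt_of_lt_of_le (by positivity) hkey
  have hDsq : 8 * pmax * β₁ ^ 2 * β₂ ≤
      (pmax * β₁ * β₂ * ((M : ℝ) - 2) - (β₁ - β₂)) ^ 2 := by
    have hsq := pow_le_pow_left₀ (by positivity) hkey 2
    have heq : (2 * t * β₁ * s) ^ 2 = 8 * pmax * β₁ ^ 2 * β₂ := by
      rw [show (2 * t * β₁ * s) ^ 2 = 4 * t ^ 2 * β₁ ^ 2 * s ^ 2 from by ring, ht2, hs2]
      ring
    linarith [heq ▸ hsq]
  have hMpos : (0:ℝ) < 1 + pmax * β₁ * (M : ℝ) := by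
    have : (2:ℝ) < (M : ℝ) := by
      have h4 : 0 < (β₁ - β₂) / (pmax * β₁ * β₂) := div_pos (by linarith) hpβ
      have h5 : 0 < 2 * t / s := by positivity
      linarith
    nlinarith
  have hmain : 1 + pmax * β₁ * (M : ℝ) ≤
      (β₁ + β₂ + pmax * β₁ * β₂ * ((M : ℝ) - 2)) ^ 2 / (4 * β₁ * β₂) := by
    rw [le_div_iff₀ (by positivity)]
    nlinarith [hDsq]
  exact (Real.logb_le_logb (b := 2) (by norm_num) hMpos (lt_of_lt_of_le hMpos hmain)).2 hmain
end

section
/- Let β_1 > β_2 > 0 and P > 0, and let a_2 = 2 + (β_1 - β_2)/(P β_1 β_2) + 2√2/√(P β_2). Then for every real M > a_2, the strict inequality (β_1 + β_2 + P β_1 β_2 (M - 2))² / (4 β_1 β_2) > 1 + P β_1 M holds; that is, for M > a_2 the two-user maximum mMIMO sum rate strictly exceeds the two-user maximum NOMA sum rate. In particular, for any fixed β_1 > β_2 > 0 and P > 0 there exists M_0 such that mMIMO strictly outperforms NOMA for all M ≥ M_0. -/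
/-- For `M > a₂ = 2 + (β₁-β₂)/(Pβ₁β₂) + 2√2/√(Pβ₂)`, the two-user maximum mMIMO
sum rate strictly exceeds the NOMA one:
`(β₁+β₂+Pβ₁β₂(M-2))²/(4β₁β₂) > 1+Pβ₁M`; in particular there is an `M₀` beyond
which mMIMO strictly outperforms NOMA. -/
theorem mmimo_strictly_beats_noma_eventually (β₁ β₂ P : ℝ)
    (hβ : β₂ < β₁) (hβ₂ : 0 < β₂) (hP : 0 < P) :
    (∀ M : ℝ,
      2 + (β₁ - β₂) / (P * β₁ * β₂) + 2 * Real.sqrt 2 / Real.sqrt (P * β₂) < M →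
      1 + P * β₁ * M < (β₁ + β₂ + P * β₁ * β₂ * (M - 2)) ^ 2 / (4 * β₁ * β₂)) ∧
      ∃ M₀ : ℝ, ∀ M : ℝ, M₀ ≤ M →
        1 + P * β₁ * M < (β₁ + β₂ + P * β₁ * β₂ * (M - 2)) ^ 2 / (4 * β₁ * β₂) := by
  have hβ₁ : 0 < β₁ := hβ₂.trans hβ
  have hc : 0 < P * β₁ * β₂ := by positivity
  have hPb : 0 < P * β₂ := by positivity
  have hsq : Real.sqrt (P * β₂) ^ 2 = P * β₂ := Real.sq_sqrt hPb.le
  have hsq2 : Real.sqrt 2 ^ 2 = 2 := Real.sq_sqrt (by norm_num)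
  have hspos : 0 < Real.sqrt (P * β₂) := Real.sqrt_pos.mpr hPb
  have key : ∀ M : ℝ,
      2 + (β₁ - β₂) / (P * β₁ * β₂) + 2 * Real.sqrt 2 / Real.sqrt (P * β₂) < M →
      1 + P * β₁ * M < (β₁ + β₂ + P * β₁ * β₂ * (M - 2)) ^ 2 / (4 * β₁ * β₂) := by
    intro M hM
    -- multiply hypothesis by P*β₁*β₂
    have h1 : (β₁ - β₂) + P * β₁ * β₂ * (2 * Real.sqrt 2 / Real.sqrt (P * β₂))
        < P * β₁ * β₂ * (M - 2) := by
      have := (mul_lt_mul_iff_right₀ hc).mpr hM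
      have hd : P * β₁ * β₂ * ((β₁ - β₂) / (P * β₁ * β₂)) = β₁ - β₂ := by
        field_simp
      nlinarith [this, hd]
    have h2 : P * β₁ * β₂ * (2 * Real.sqrt 2 / Real.sqrt (P * β₂))
        = 2 * Real.sqrt 2 * β₁ * Real.sqrt (P * β₂) := by
      rw [mul_div_assoc', div_eq_iff hspos.ne']
      linear_combination (-2) * Real.sqrt 2 * β₁ * hsq
    have h3 : 2 * Real.sqrt 2 * β₁ * Real.sqrt (P * β₂)
        < P * β₁ * β₂ * (M - 2) - (β₁ - β₂) := by
      rw [h2] at h1; linarith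
    have hs0 : 0 ≤ 2 * Real.sqrt 2 * β₁ * Real.sqrt (P * β₂) := by positivity
    have h4 : (2 * Real.sqrt 2 * β₁ * Real.sqrt (P * β₂)) ^ 2
        < (P * β₁ * β₂ * (M - 2) - (β₁ - β₂)) ^ 2 := by
      nlinarith [h3, hs0]
    have h5 : (2 * Real.sqrt 2 * β₁ * Real.sqrt (P * β₂)) ^ 2
        = 8 * P * β₁ ^ 2 * β₂ := by
      have : (2 * Real.sqrt 2 * β₁ * Real.sqrt (P * β₂)) ^ 2
          = 4 * Real.sqrt 2 ^ 2 * β₁ ^ 2 * Real.sqrt (P * β₂) ^ 2 := by ring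
      rw [this, hsq, hsq2]; ring
    rw [lt_div_iff₀ (by positivity)]
    nlinarith [h4, h5]
  exact ⟨key, ⟨2 + (β₁ - β₂) / (P * β₁ * β₂) + 2 * Real.sqrt 2 / Real.sqrt (P * β₂) + 1,
    fun M hM => key M (by linarith)⟩⟩
end

section
/- Let A > β_2 > 0 and P > 0. For the function f(p_1, p_2) = log₂(1 + A p_1) + log₂(1 + β_2 p_2/(1 + β_2 p_1)) defined for p_1, p_2 ≥ 0, and for any total power P > 0, the maximum of f over the line segment {(p_1, p_2) : p_1, p_2 ≥ 0, p_1 + p_2 = P} equals f(P, 0), and (P, 0) is the unique maximizer on that segment. -/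
/-- Per-group NOMA power splitting: for `A > β₂ > 0` and total group power `P > 0`,
the function `f(p₁,p₂) = log₂(1+Ap₁) + log₂(1+β₂p₂/(1+β₂p₁))` over the segment
`{p₁,p₂ ≥ 0, p₁+p₂ = P}` is maximized exactly at `(P,0)`. -/
theorem noma_group_split_max_unique (A β₂ P : ℝ)
    (hA : β₂ < A) (hβ₂ : 0 < β₂) (hP : 0 < P) :
    (∀ p₁ p₂ : ℝ, 0 ≤ p₁ → 0 ≤ p₂ → p₁ + p₂ = P →
      Real.logb 2 (1 + A * p₁) + Real.logb 2 (1 + β₂ * p₂ / (1 + β₂ * p₁)) ≤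
        Real.logb 2 (1 + A * P) + Real.logb 2 (1 + β₂ * 0 / (1 + β₂ * P))) ∧
      ∀ p₁ p₂ : ℝ, 0 ≤ p₁ → 0 ≤ p₂ → p₁ + p₂ = P →
        Real.logb 2 (1 + A * p₁) + Real.logb 2 (1 + β₂ * p₂ / (1 + β₂ * p₁)) =
          Real.logb 2 (1 + A * P) + Real.logb 2 (1 + β₂ * 0 / (1 + β₂ * P)) →
        p₁ = P ∧ p₂ = 0 := by
  have hA0 : 0 < A := hβ₂.trans hA
  have hb : (1:ℝ) < 2 := one_lt_two
  -- rewrite right-hand side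
  have hrhs : Real.logb 2 (1 + A * P) + Real.logb 2 (1 + β₂ * 0 / (1 + β₂ * P)) =
      Real.logb 2 (1 + A * P) := by
    norm_num
  have hAP : (0:ℝ) < 1 + A * P := by positivity
  -- combine left-hand side into single logb
  have key : ∀ p₁ p₂ : ℝ, 0 ≤ p₁ → 0 ≤ p₂ → p₁ + p₂ = P →
      Real.logb 2 (1 + A * p₁) + Real.logb 2 (1 + β₂ * p₂ / (1 + β₂ * p₁)) =
        Real.logb 2 ((1 + A * p₁) * (1 + β₂ * P) / (1 + β₂ * p₁)) := by
    intro p₁ p₂ h1 h2 hsum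
    have hd : (0:ℝ) < 1 + β₂ * p₁ := by positivity
    have hx : (0:ℝ) < 1 + A * p₁ := by positivity
    have hy : (0:ℝ) < 1 + β₂ * p₂ / (1 + β₂ * p₁) := by positivity
    rw [← Real.logb_mul (ne_of_gt hx) (ne_of_gt hy)]
    subst hsum
    field_simp
    ring
  have ineq : ∀ p₁ p₂ : ℝ, 0 ≤ p₁ → 0 ≤ p₂ → p₁ + p₂ = P →
      (1 + A * p₁) * (1 + β₂ * P) / (1 + β₂ * p₁) ≤ 1 + A * P := by
    intro p₁ p₂ h1 h2 hsum
    have hd : (0:ℝ) < 1 + β₂ * p₁ := by positivity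
    rw [div_le_iff₀ hd]
    nlinarith [mul_nonneg h2 (le_of_lt (sub_pos.mpr hA))]
  constructor
  · intro p₁ p₂ h1 h2 hsum
    rw [key p₁ p₂ h1 h2 hsum, hrhs]
    have hd : (0:ℝ) < 1 + β₂ * p₁ := by positivity
    have hpos : (0:ℝ) < (1 + A * p₁) * (1 + β₂ * P) / (1 + β₂ * p₁) := by positivity
    exact (Real.logb_le_logb hb hpos hAP).mpr (ineq p₁ p₂ h1 h2 hsum)
  · intro p₁ p₂ h1 h2 hsum heq
    have hp1P : p₁ = P := by
      by_contra hne
      have hlt : p₁ < P := lt_of_le_of_ne (by linarith) hne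
      have hd : (0:ℝ) < 1 + β₂ * p₁ := by positivity
      have hstrict : (1 + A * p₁) * (1 + β₂ * P) / (1 + β₂ * p₁) < 1 + A * P := by
        rw [div_lt_iff₀ hd]
        nlinarith [mul_pos (sub_pos.mpr hlt) (sub_pos.mpr hA)]
      have hpos : (0:ℝ) < (1 + A * p₁) * (1 + β₂ * P) / (1 + β₂ * p₁) := by positivity
      have := Real.logb_lt_logb hb hpos hstrict
      rw [key p₁ p₂ h1 h2 hsum, hrhs] at heq
      linarith
    exact ⟨hp1P, by linarith⟩
end
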